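/- arXiv:cs/0307069 — 6 statements merged into one kernel-verified Lean document; each statement's English description precedes it below -/
import Mathlib

section
/- For any nonempty set P of probability measures and any events A, B: P_*(A) + P^*(B) ≤ P^*(A ∪ B) + P^*(A ∩ B). -/
open Set

def IsProb {Ω : Type*} (μ : Set Ω → ℝ) : Prop :=
  μ ∅ = 0 ∧ μ Set.univ = 1 ∧ (∀ A : Set Ω, 0 ≤ μ A ∧ μ A ≤ 1) ∧
    ∀ A B : Set Ω, Disjoint A B → μ (A ∪ B) = μ A + μ B

noncomputable def up {Ω : Type*} (P : Set (Set Ω → ℝ)) (X : Set Ω) : ℝ :=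
  sSup ((fun μ => μ X) '' P)

noncomputable def low {Ω : Type*} (P : Set (Set Ω → ℝ)) (X : Set Ω) : ℝ :=
  sInf ((fun μ => μ X) '' P)

lemma modular {Ω : Type*} {μ : Set Ω → ℝ} (h : IsProb μ) (A B : Set Ω) :
    μ A + μ B = μ (A ∪ B) + μ (A ∩ B) := by
  obtain ⟨-, -, -, hadd⟩ := h
  have h1 : μ (A ∪ B) = μ A + μ (B \ A) := by
    rw [← hadd A (B \ A) disjoint_sdiff_self_right]
    congr 1
    rw [Set.union_diff_self]
  have h2 : μ B = μ (A ∩ B) + μ (B \ A) := by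
    rw [← hadd (A ∩ B) (B \ A) (disjoint_sdiff_self_right.mono_left inter_subset_left)]
    congr 1
    ext x; simp [and_comm]; tauto
  rw [h1, h2]; ring

lemma bddA {Ω : Type*} (P : Set (Set Ω → ℝ)) (hP : ∀ μ ∈ P, IsProb μ) (X : Set Ω) :
    BddAbove ((fun μ => μ X) '' P) := by
  refine ⟨1, ?_⟩
  rintro x ⟨μ, hμ, rfl⟩
  exact ((hP μ hμ).2.2.1 X).2

lemma bddB {Ω : Type*} (P : Set (Set Ω → ℝ)) (hP : ∀ μ ∈ P, IsProb μ) (X : Set Ω) :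
    BddBelow ((fun μ => μ X) '' P) := by
  refine ⟨0, ?_⟩
  rintro x ⟨μ, hμ, rfl⟩
  exact ((hP μ hμ).2.2.1 X).1

theorem lower_add_upper_le {Ω : Type*} [Fintype Ω]
    (P : Set (Set Ω → ℝ)) (hne : P.Nonempty) (hP : ∀ μ ∈ P, IsProb μ)
    (A B : Set Ω) :
    low P A + up P B ≤ up P (A ∪ B) + up P (A ∩ B) := by
  unfold up low
  have key : sSup ((fun μ => μ B) '' P) ≤
      sSup ((fun μ => μ (A ∪ B)) '' P) + sSup ((fun μ => μ (A ∩ B)) '' P)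
        - sInf ((fun μ => μ A) '' P) := by
    apply Real.sSup_le
    · rintro x ⟨μ, hμ, rfl⟩
      have hm := modular (hP μ hμ) A B
      have hle : sInf ((fun μ => μ A) '' P) ≤ μ A :=
        csInf_le (bddB P hP A) ⟨μ, hμ, rfl⟩
      have hu : μ (A ∪ B) ≤ sSup ((fun μ => μ (A ∪ B)) '' P) :=
        le_csSup (bddA P hP (A ∪ B)) ⟨μ, hμ, rfl⟩
      have hi : μ (A ∩ B) ≤ sSup ((fun μ => μ (A ∩ B)) '' P) :=
        le_csSup (bddA P hP (A ∩ B)) ⟨μ, hμ, rfl⟩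
      linarith
    · obtain ⟨μ, hμ⟩ := hne
      have h1 : μ A ≤ 1 := ((hP μ hμ).2.2.1 A).2
      have hle : sInf ((fun μ => μ A) '' P) ≤ μ A :=
        csInf_le (bddB P hP A) ⟨μ, hμ, rfl⟩
      have hu : μ (A ∪ B) ≤ sSup ((fun μ => μ (A ∪ B)) '' P) :=
        le_csSup (bddA P hP (A ∪ B)) ⟨μ, hμ, rfl⟩
      have hi : μ (A ∩ B) ≤ sSup ((fun μ => μ (A ∩ B)) '' P) :=
        le_csSup (bddA P hP (A ∩ B)) ⟨μ, hμ, rfl⟩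
      have := ((hP μ hμ).2.2.1 (A ∪ B)).1
      have := ((hP μ hμ).2.2.1 (A ∩ B)).1
      have := ((hP μ hμ).2.2.1 B).1
      have hm := modular (hP μ hμ) A B
      linarith
  linarith
end

section
/- Suppose f assigns a real to each subset of a finite Ω and satisfies: for all disjoint A, B, f(A) + f_*(B) ≤ f(A ∪ B) ≤ f(A) + f(B), where f_*(X) := 1 - f(Ω \ X). Then for all (not necessarily disjoint) A, B: f_*(A ∪ B) + f_*(A ∩ B) ≤ f_*(A) + f(B), where again f_*(X) = 1 - f(Ω \ X). (That is, property (6) implies property (9).) -/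
open Set

theorem prop6_implies_prop9 {Ω : Type*} [Fintype Ω] (f : Set Ω → ℝ)
    (h0 : f ∅ = 0) (h1 : f Set.univ = 1)
    (hmono : ∀ A B : Set Ω, A ⊆ B → f A ≤ f B)
    (hsand : ∀ A B : Set Ω, A ∩ B = ∅ →
      f A + (1 - f Bᶜ) ≤ f (A ∪ B) ∧ f (A ∪ B) ≤ f A + f B) :
    ∀ A B : Set Ω,
      (1 - f ((A ∪ B)ᶜ)) + (1 - f ((A ∩ B)ᶜ)) ≤ (1 - f Aᶜ) + f B := by
  intro A B
  have e1 : (Aᶜ ∩ Bᶜ) ∪ (Aᶜ ∩ B) = Aᶜ := by ext x; simp only [Set.mem_inter_iff, Set.mem_union, Set.mem_compl_iff, Set.mem_empty_iff_false, iff_false, not_and, not_or]; try tauto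
  have e2 : (Aᶜ ∩ B) ∪ (A ∩ B) = B := by ext x; simp only [Set.mem_inter_iff, Set.mem_union, Set.mem_compl_iff, Set.mem_empty_iff_false, iff_false, not_and, not_or]; try tauto
  have e3 : (A ∩ B)ᶜ = Aᶜ ∪ Bᶜ := by ext x; simp only [Set.mem_inter_iff, Set.mem_union, Set.mem_compl_iff, Set.mem_empty_iff_false, iff_false, not_and, not_or]; try tauto
  have e4 : (A ∪ B)ᶜ = Aᶜ ∩ Bᶜ := by ext x; simp only [Set.mem_inter_iff, Set.mem_union, Set.mem_compl_iff, Set.mem_empty_iff_false, iff_false, not_and, not_or]; try tauto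
  have hsub := (hsand (Aᶜ ∩ Bᶜ) (Aᶜ ∩ B) (by ext x; simp only [Set.mem_inter_iff, Set.mem_union, Set.mem_compl_iff, Set.mem_empty_iff_false, iff_false, not_and, not_or]; try tauto)).2
  have hsup := (hsand (Aᶜ ∩ B) (A ∩ B) (by ext x; simp only [Set.mem_inter_iff, Set.mem_union, Set.mem_compl_iff, Set.mem_empty_iff_false, iff_false, not_and, not_or]; try tauto)).1
  rw [e1] at hsub
  rw [e2, e3] at hsup
  rw [e3, e4]
  linarith
end

section
/- Let Ω = {a,b,c,d} and let P be the set of four probability measures μ1 = (1/4,1/4,1/4,1/4), μ2 = (0,1/8,3/8,1/2), μ3 = (1/8,3/8,0,1/2), μ4 = (3/8,0,1/8,1/2) (values on a,b,c,d respectively, extended additively). Fix ε with 0 < ε < 1/8, and define υ_ε(X) = P^*(X) + ε if X = {a,b,c} and υ_ε(X) = P^*(X) otherwise. Then there is no nonempty set P' of probability measures on Ω such that υ_ε(X) = sup{μ(X) : μ ∈ P'} for every X ⊆ Ω. -/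
open Set

open Classical in
noncomputable def pm (w : Fin 4 → ℝ) (X : Set (Fin 4)) : ℝ :=
  ∑ x : Fin 4, if x ∈ X then w x else 0

noncomputable def upstar (X : Set (Fin 4)) : ℝ :=
  max (max (pm (fun _ => 1/4) X) (pm ![0, 1/8, 3/8, 1/2] X))
      (max (pm ![1/8, 3/8, 0, 1/2] X) (pm ![3/8, 0, 1/8, 1/2] X))

open Classical in
noncomputable def upsEps (ε : ℝ) (X : Set (Fin 4)) : ℝ :=
  if X = ({0, 1, 2} : Set (Fin 4)) then upstar X + ε else upstar X

/-! Each probability `μ` satisfies `2 μ {x, y, z} = μ {x, y} + μ {x, z} + μ {y, z}`, so the upper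
envelope `υ` of any family of probabilities satisfies `2 υ {x, y, z} ≤ υ {x, y} + υ {x, z} + υ {y, z}`.
For `P^*` this is an equality on `{a, b, c}` (`2 · 3/4 = 3 · 1/2`), so raising only `P^* {a, b, c}`
by `ε > 0` violates it. -/

namespace IsProb

variable {Ω : Type*} {μ : Set Ω → ℝ}

theorem apply_le_one (hμ : IsProb μ) (A : Set Ω) : μ A ≤ 1 :=
  (hμ.2.2.1 A).2

theorem apply_insert (hμ : IsProb μ) {a : Ω} {A : Set Ω} (ha : a ∉ A) :
    μ (insert a A) = μ {a} + μ A := by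
  rw [← singleton_union]
  exact hμ.2.2.2 _ _ (disjoint_singleton_left.2 ha)

theorem two_mul_apply_triple (hμ : IsProb μ) {x y z : Ω} (hxy : x ≠ y) (hxz : x ≠ z)
    (hyz : y ≠ z) : 2 * μ {x, y, z} = μ {x, y} + μ {x, z} + μ {y, z} := by
  have hx : x ∉ ({y, z} : Set Ω) := by simp [hxy, hxz]
  rw [hμ.apply_insert hx, hμ.apply_insert (mem_singleton_iff.not.2 hxy),
    hμ.apply_insert (mem_singleton_iff.not.2 hxz), hμ.apply_insert (mem_singleton_iff.not.2 hyz)]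
  ring

end IsProb

section UpperEnvelope

variable {Ω : Type*}

noncomputable def upperEnvelope (P' : Set (Set Ω → ℝ)) (X : Set Ω) : ℝ :=
  sSup ((fun μ => μ X) '' P')

theorem apply_le_upperEnvelope {P' : Set (Set Ω → ℝ)} (hP : ∀ μ ∈ P', IsProb μ)
    {μ : Set Ω → ℝ} (hμ : μ ∈ P') (X : Set Ω) : μ X ≤ upperEnvelope P' X :=
  le_csSup ⟨1, by rintro _ ⟨ν, hν, rfl⟩; exact (hP ν hν).apply_le_one X⟩ ⟨μ, hμ, rfl⟩

theorem two_mul_upperEnvelope_triple_le {P' : Set (Set Ω → ℝ)} (hne : P'.Nonempty)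
    (hP : ∀ μ ∈ P', IsProb μ) {x y z : Ω} (hxy : x ≠ y) (hxz : x ≠ z) (hyz : y ≠ z) :
    2 * upperEnvelope P' {x, y, z} ≤
      upperEnvelope P' {x, y} + upperEnvelope P' {x, z} + upperEnvelope P' {y, z} := by
  suffices upperEnvelope P' {x, y, z} ≤
      (upperEnvelope P' {x, y} + upperEnvelope P' {x, z} + upperEnvelope P' {y, z}) / 2 by
    linarith
  refine csSup_le (hne.image _) ?_
  rintro _ ⟨μ, hμ, rfl⟩
  have hμxyz := (hP μ hμ).two_mul_apply_triple hxy hxz hyz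
  linarith [apply_le_upperEnvelope hP hμ {x, y}, apply_le_upperEnvelope hP hμ {x, z},
    apply_le_upperEnvelope hP hμ {y, z}]

end UpperEnvelope

theorem upsEps_triple (ε : ℝ) : upsEps ε {0, 1, 2} = 3 / 4 + ε := by
  norm_num +decide [upsEps, upstar, pm, Fin.sum_univ_four, Matrix.cons_val_two]

theorem upsEps_pairs (ε : ℝ) :
    upsEps ε {0, 1} = 1 / 2 ∧ upsEps ε {0, 2} = 1 / 2 ∧ upsEps ε {1, 2} = 1 / 2 := by
  norm_num +decide [upsEps, upstar, pm, Fin.sum_univ_four, Set.ext_iff, Matrix.cons_val_two]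

theorem upsEps_not_upper_probability_general (ε : ℝ) (hε : 0 < ε) :
    ¬ ∃ P' : Set (Set (Fin 4) → ℝ), P'.Nonempty ∧ (∀ μ ∈ P', IsProb μ) ∧
      ∀ X : Set (Fin 4), upsEps ε X = sSup ((fun μ => μ X) '' P') := by
  rintro ⟨P', hne, hP, hsup⟩
  have henv : upsEps ε = upperEnvelope P' := funext hsup
  have htriple := two_mul_upperEnvelope_triple_le hne hP (x := 0) (y := 1) (z := 2)
    (by decide) (by decide) (by decide)
  obtain ⟨h01, h02, h12⟩ := upsEps_pairs ε
  rw [← henv, upsEps_triple, h01, h02, h12] at htriple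
  linarith

theorem upsEps_not_upper_probability (ε : ℝ) (hε : 0 < ε) (hε' : ε < 1/8) :
    ¬ ∃ P' : Set (Set (Fin 4) → ℝ), P'.Nonempty ∧ (∀ μ ∈ P', IsProb μ) ∧
      ∀ X : Set (Fin 4), upsEps ε X = sSup ((fun μ => μ X) '' P') :=
  upsEps_not_upper_probability_general ε hε
end

section
/- If P is a nonempty set of probability measures on an algebra Σ over Ω, then P^* satisfies: for all natural numbers m, n, k with n > 0, all A, A_1, …, A_m ∈ Σ, if the multiset {{A_1, …, A_m}} covers Ω at least k times and covers A at least n + k times (i.e., every x ∈ Ω lies in at least k of the A_i, and every x ∈ A lies in at least n + k of the A_i), then k + n·P^*(A) ≤ Σ_{i=1}^m P^*(A_i). -/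
open Set

lemma IsProb.mono' {Ω : Type*} {μ : Set Ω → ℝ} (hμ : IsProb μ) {A B : Set Ω}
    (h : A ⊆ B) : μ A ≤ μ B := by
  have := hμ.2.2.2 A (B \ A) disjoint_sdiff_self_right
  rw [Set.union_diff_cancel h] at this
  rw [this]
  have := (hμ.2.2.1 (B \ A)).1
  linarith

lemma IsProb.sum' {Ω ι : Type*} {μ : Set Ω → ℝ} (hμ : IsProb μ)
    (s : Finset ι) (f : ι → Set Ω)
    (hd : ∀ i ∈ s, ∀ j ∈ s, i ≠ j → Disjoint (f i) (f j)) :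
    μ (⋃ i ∈ s, f i) = ∑ i ∈ s, μ (f i) := by
  classical
  revert hd
  induction s using Finset.induction with
  | empty => exact fun _ => by simpa using hμ.1
  | @insert a s ha ih =>
    intro hd
    rw [Finset.sum_insert ha, Finset.set_biUnion_insert,
      hμ.2.2.2 _ _ (by
        rw [Set.disjoint_iUnion₂_right]
        intro i hi
        exact hd a (Finset.mem_insert_self a s) i (Finset.mem_insert_of_mem hi)
          (fun h => ha (h ▸ hi))),
      ih (fun i hi j hj hij => hd i (Finset.mem_insert_of_mem hi) j
        (Finset.mem_insert_of_mem hj) hij)]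

open Classical in
theorem upper_prob_cover_ineq {Ω : Type*} (P : Set (Set Ω → ℝ))
    (hne : P.Nonempty) (hP : ∀ μ ∈ P, IsProb μ)
    (m n k : ℕ) (hn : 0 < n) (A : Set Ω) (As : Fin m → Set Ω)
    (hΩ : ∀ x : Ω, k ≤ (Finset.univ.filter (fun i => x ∈ As i)).card)
    (hA : ∀ x ∈ A, n + k ≤ (Finset.univ.filter (fun i => x ∈ As i)).card) :
    (k : ℝ) + (n : ℝ) * up P A ≤ ∑ i, up P (As i) := by
  classical
  -- Step 1: pointwise claim for each μ ∈ P
  have claim : ∀ μ ∈ P, (k : ℝ) + (n : ℝ) * μ A ≤ ∑ i, μ (As i) := by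
    intro μ hμP
    have hμ := hP μ hμP
    set cell : Finset (Fin m) → Set Ω := fun S => {x | ∀ i, x ∈ As i ↔ i ∈ S} with hcell
    have hmem : ∀ x : Ω, x ∈ cell (Finset.univ.filter (fun i => x ∈ As i)) := by
      intro x i; simp [hcell]
    have hdis : ∀ S T : Finset (Fin m), S ≠ T → Disjoint (cell S) (cell T) := by
      intro S T hST
      rw [Set.disjoint_left]
      intro x hxS hxT
      exact hST (Finset.ext fun i => ((hxS i).symm.trans (hxT i)))
    have hfix : ∀ (S : Finset (Fin m)) (x : Ω), x ∈ cell S →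
        Finset.univ.filter (fun i => x ∈ As i) = S := by
      intro S x hx
      ext i
      simpa using hx i
    have hnn : ∀ S, 0 ≤ μ (cell S) := fun S => (hμ.2.2.1 (cell S)).1
    -- each As i is the union of cells containing i
    have hAs : ∀ i, As i = ⋃ S ∈ Finset.univ.filter (fun S => i ∈ S), cell S := by
      intro i
      ext x
      constructor
      · intro hx
        exact Set.mem_biUnion (Finset.mem_filter.2 ⟨Finset.mem_univ _, by simp [hx]⟩) (hmem x)
      · intro hx
        obtain ⟨S, hS, hxS⟩ := Set.mem_iUnion₂.1 hx
        simp only [Finset.mem_filter] at hS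
        exact (hxS i).2 hS.2
    have hμsum : ∀ i, μ (As i) = ∑ S ∈ Finset.univ.filter (fun S => i ∈ S), μ (cell S) := by
      intro i
      rw [hAs i]
      exact hμ.sum' _ _ (fun S _ T _ h => hdis S T h)
    have key : (∑ i, μ (As i)) = ∑ S : Finset (Fin m), (S.card : ℝ) * μ (cell S) := by
      simp only [hμsum]
      simp only [Finset.sum_filter]
      rw [Finset.sum_comm]
      refine Finset.sum_congr rfl fun S _ => ?_
      rw [Finset.sum_ite_mem, Finset.univ_inter, Finset.sum_const, nsmul_eq_mul]
    -- partition of univ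
    have hpart : (1 : ℝ) = ∑ S : Finset (Fin m), μ (cell S) := by
      rw [← hμ.2.1]
      have : (Set.univ : Set Ω) = ⋃ S ∈ (Finset.univ : Finset (Finset (Fin m))), cell S := by
        ext x
        simp only [Set.mem_univ, true_iff]
        exact Set.mem_biUnion (Finset.mem_univ _) (hmem x)
      rw [this, hμ.sum' _ _ (fun S _ T _ h => hdis S T h)]
    -- μ A is at most the sum over cells meeting A
    have hAle : μ A ≤ ∑ S ∈ Finset.univ.filter (fun S => (cell S ∩ A).Nonempty), μ (cell S) := by
      rw [← hμ.sum' _ _ (fun S _ T _ h => hdis S T h)]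
      apply hμ.mono'
      intro x hx
      refine Set.mem_biUnion (Finset.mem_filter.2 ⟨Finset.mem_univ _, ⟨x, hmem x, hx⟩⟩) (hmem x)
    -- per-cell bound
    have hterm : ∀ S : Finset (Fin m),
        (k : ℝ) * μ (cell S) + (n : ℝ) * (if (cell S ∩ A).Nonempty then μ (cell S) else 0)
          ≤ (S.card : ℝ) * μ (cell S) := by
      intro S
      by_cases hS : (cell S).Nonempty
      · obtain ⟨x, hx⟩ := hS
        have hcard : k ≤ S.card := hfix S x hx ▸ hΩ x
        by_cases hSA : (cell S ∩ A).Nonempty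
        · obtain ⟨y, hyS, hyA⟩ := id hSA
          have hcard2 : n + k ≤ S.card := hfix S y hyS ▸ hA y hyA
          have : ((n : ℝ) + k) ≤ S.card := by exact_mod_cast hcard2
          have h0 := hnn S
          rw [if_pos hSA]
          nlinarith
        · simp only [if_neg hSA, mul_zero, add_zero]
          have : (k : ℝ) ≤ S.card := by exact_mod_cast hcard
          exact mul_le_mul_of_nonneg_right this (hnn S)
      · have he : cell S = ∅ := Set.not_nonempty_iff_eq_empty.1 hS
        have hSA : ¬ (cell S ∩ A).Nonempty := by
          rw [he]; simp
        rw [he, hμ.1]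
        simp
    calc (k : ℝ) + (n : ℝ) * μ A
        ≤ (k : ℝ) * ∑ S : Finset (Fin m), μ (cell S)
          + (n : ℝ) * ∑ S ∈ Finset.univ.filter (fun S => (cell S ∩ A).Nonempty), μ (cell S) := by
          rw [← hpart, mul_one]
          have hn0 : (0 : ℝ) ≤ n := Nat.cast_nonneg n
          nlinarith [hAle]
      _ = ∑ S : Finset (Fin m), ((k : ℝ) * μ (cell S)
          + (n : ℝ) * (if (cell S ∩ A).Nonempty then μ (cell S) else 0)) := by
          rw [Finset.sum_add_distrib]
          congr 1
          · rw [Finset.mul_sum]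
          · rw [Finset.mul_sum, Finset.sum_filter]
            exact Finset.sum_congr rfl fun S _ => by split <;> simp
      _ ≤ ∑ S : Finset (Fin m), (S.card : ℝ) * μ (cell S) :=
          Finset.sum_le_sum fun S _ => hterm S
      _ = ∑ i, μ (As i) := key.symm
  -- Step 2: pass to supremum
  have hbdd : ∀ X : Set Ω, BddAbove ((fun μ => μ X) '' P) := by
    intro X
    exact ⟨1, fun x hx => by obtain ⟨ν, hν, rfl⟩ := hx; exact ((hP ν hν).2.2.1 X).2⟩
  have hup : ∀ μ ∈ P, ∀ X, μ X ≤ up P X := by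
    intro μ hμ X
    exact le_csSup (hbdd X) ⟨μ, hμ, rfl⟩
  have hmain : ∀ μ ∈ P, (k : ℝ) + (n : ℝ) * μ A ≤ ∑ i, up P (As i) := by
    intro μ hμ
    exact (claim μ hμ).trans (Finset.sum_le_sum fun i _ => hup μ hμ (As i))
  have hnpos : (0 : ℝ) < n := by exact_mod_cast hn
  have hfin : up P A ≤ ((∑ i, up P (As i)) - k) / n := by
    apply csSup_le (hne.image _)
    rintro x ⟨μ, hμ, rfl⟩
    rw [le_div_iff₀ hnpos]
    have := hmain μ hμ
    linarith
  rw [le_div_iff₀ hnpos] at hfin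
  linarith
end

section
/- If μ is a finitely additive probability measure on Ω and the finite family A_1, …, A_m of subsets covers Ω at least k times and covers A at least n + k times, then k + n·μ(A) ≤ Σ_{i=1}^m μ(A_i). -/
open Set Classical in
theorem prob_measure_cover_ineq {Ω : Type*} [Fintype Ω]
    (w : Ω → ℝ) (hw : ∀ x, 0 ≤ w x) (hsum : ∑ x, w x = 1)
    (μ : Set Ω → ℝ) (hμ : ∀ X : Set Ω, μ X = ∑ x : Ω, if x ∈ X then w x else 0)
    (m n k : ℕ) (A : Set Ω) (As : Fin m → Set Ω)
    (hΩ : ∀ x : Ω, k ≤ (Finset.univ.filter (fun i => x ∈ As i)).card)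
    (hA : ∀ x ∈ A, n + k ≤ (Finset.univ.filter (fun i => x ∈ As i)).card) :
    (k : ℝ) + (n : ℝ) * μ A ≤ ∑ i, μ (As i) := by
  have key : ∑ i, μ (As i)
      = ∑ x : Ω, ((Finset.univ.filter (fun i => x ∈ As i)).card : ℝ) * w x := by
    simp only [hμ]
    rw [Finset.sum_comm]
    refine Finset.sum_congr rfl fun x _ => ?_
    rw [Finset.sum_ite, Finset.sum_const_zero, add_zero, Finset.sum_const, nsmul_eq_mul]
  rw [key, hμ, Finset.mul_sum]
  nth_rewrite 1 [show (k:ℝ) = ∑ x, (k:ℝ) * w x by rw [← Finset.mul_sum, hsum, mul_one]]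
  rw [← Finset.sum_add_distrib]
  refine Finset.sum_le_sum fun x _ => ?_
  by_cases hx : x ∈ A
  · have := hA x hx
    have : ((n + k : ℕ) : ℝ) ≤ ((Finset.univ.filter (fun i => x ∈ As i)).card : ℝ) := by
      exact_mod_cast this
    push_cast at this
    simp only [hx, if_pos]
    nlinarith [hw x]
  · have := hΩ x
    have h2 : ((k : ℕ) : ℝ) ≤ ((Finset.univ.filter (fun i => x ∈ As i)).card : ℝ) := by
      exact_mod_cast this
    rw [if_neg hx, mul_zero, add_zero]
    nlinarith [hw x]
end

section
/- If {{A_1, …, A_m}} is an (n,k)-cover of (A,Ω) (every point of Ω covered at least k times, every point of A at least n + k times), then there exist subsets A'_i ⊆ A_i such that {{A'_1, …, A'_m}} is an exact (n,k)-cover of (A,Ω): every point of A lies in exactly n + k of the A'_i and every point of Ω \ A lies in exactly k of them. -/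
open Finset in
lemma fin_count (n t : ℕ) : (Finset.univ.filter (fun j : Fin n => (j : ℕ) < t)).card = min t n := by
  have h : (Finset.univ.filter (fun j : Fin n => (j : ℕ) < t)) =
      (Finset.range (min t n)).attachFin (fun m hm => lt_of_lt_of_le (Finset.mem_range.mp hm) (min_le_right _ _)) := by
    ext j
    simp [Finset.mem_attachFin]
  rw [h, Finset.card_attachFin, Finset.card_range]

open Finset in
lemma rank_orderEmb {α : Type*} [LinearOrder α] [DecidableEq α] (S : Finset α) (j : Fin S.card) :
    (S.filter (fun i => i < S.orderEmbOfFin rfl j)).card = (j : ℕ) := by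
  have e := S.orderEmbOfFin (k := S.card) rfl
  have himg : S.filter (fun i => i < S.orderEmbOfFin rfl j) =
      Finset.image (S.orderEmbOfFin rfl) (Finset.univ.filter (fun j' : Fin S.card => j' < j)) := by
    ext i
    simp only [Finset.mem_filter, Finset.mem_image, Finset.mem_univ, true_and]
    constructor
    · rintro ⟨hiS, hlt⟩
      have : i ∈ Set.range (S.orderEmbOfFin rfl) := by
        rw [Finset.range_orderEmbOfFin]; exact hiS
      obtain ⟨j', hj'⟩ := this
      refine ⟨j', ?_, hj'⟩
      rw [← hj'] at hlt
      exact (S.orderEmbOfFin rfl).strictMono.lt_iff_lt.mp hlt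
    · rintro ⟨j', hj', rfl⟩
      exact ⟨Finset.orderEmbOfFin_mem _ _ _, (S.orderEmbOfFin rfl).strictMono hj'⟩
  rw [himg, Finset.card_image_of_injective _ (S.orderEmbOfFin rfl).injective]
  have : (Finset.univ.filter (fun j' : Fin S.card => j' < j)).card = min (j : ℕ) S.card := by
    rw [← fin_count S.card (j : ℕ)]
    congr 1
  rw [this, min_eq_left (le_of_lt j.isLt)]

open Finset in
lemma rank_count {α : Type*} [LinearOrder α] [DecidableEq α] (S : Finset α) (t : ℕ) :
    (S.filter (fun i => (S.filter (fun j => j < i)).card < t)).card = min t S.card := by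
  have himg : S.filter (fun i => (S.filter (fun j => j < i)).card < t) =
      Finset.image (S.orderEmbOfFin rfl) (Finset.univ.filter (fun j : Fin S.card => (j : ℕ) < t)) := by
    ext i
    simp only [Finset.mem_filter, Finset.mem_image, Finset.mem_univ, true_and]
    constructor
    · rintro ⟨hiS, hlt⟩
      have : i ∈ Set.range (S.orderEmbOfFin rfl) := by
        rw [Finset.range_orderEmbOfFin]; exact hiS
      obtain ⟨j, hj⟩ := this
      refine ⟨j, ?_, hj⟩
      rw [← hj, rank_orderEmb S j] at hlt
      exact hlt
    · rintro ⟨j, hj, rfl⟩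
      exact ⟨Finset.orderEmbOfFin_mem _ _ _, by rw [rank_orderEmb S j]; exact hj⟩
  rw [himg, Finset.card_image_of_injective _ (S.orderEmbOfFin rfl).injective, fin_count]

open Set Classical in
theorem cover_to_exact_cover {Ω : Type*} [Fintype Ω]
    (m n k : ℕ) (A : Set Ω) (As : Fin m → Set Ω)
    (hΩ : ∀ x : Ω, k ≤ (Finset.univ.filter (fun i => x ∈ As i)).card)
    (hA : ∀ x ∈ A, n + k ≤ (Finset.univ.filter (fun i => x ∈ As i)).card) :
    ∃ As' : Fin m → Set Ω, (∀ i, As' i ⊆ As i) ∧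
      (∀ x ∈ A, (Finset.univ.filter (fun i => x ∈ As' i)).card = n + k) ∧
      (∀ x ∉ A, (Finset.univ.filter (fun i => x ∈ As' i)).card = k) := by
  classical
  set t : Ω → ℕ := fun x => if x ∈ A then n + k else k with ht
  set S : Ω → Finset (Fin m) := fun x => Finset.univ.filter (fun i => x ∈ As i) with hS
  refine ⟨fun i => {x | x ∈ As i ∧ ((S x).filter (fun j => j < i)).card < t x}, ?_, ?_, ?_⟩
  · intro i x hx; exact hx.1
  · intro x hx
    have htx : t x = n + k := by simp [ht, hx]
    have hle : t x ≤ (S x).card := by rw [htx]; exact hA x hx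
    have h2 : ((S x).filter (fun i => ((S x).filter (fun j => j < i)).card < t x)).card
        = t x := by rw [rank_count, min_eq_left hle]
    simp only [Set.mem_setOf_eq]
    rw [← htx]
    refine Eq.trans ?_ h2
    congr 1
    ext i
    simp [hS]
  · intro x hx
    have htx : t x = k := by simp [ht, hx]
    have hle : t x ≤ (S x).card := by rw [htx]; exact hΩ x
    have h2 : ((S x).filter (fun i => ((S x).filter (fun j => j < i)).card < t x)).card
        = t x := by rw [rank_count, min_eq_left hle]
    simp only [Set.mem_setOf_eq]
    rw [← htx]
    refine Eq.trans ?_ h2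
    congr 1
    ext i
    simp [hS]
end
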